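/- For r > 0 and w ∈ ℝ, concatenating the four explicit sector solutions of the unperturbed 4-zone system, the time-2π return map satisfies x(2π, (r,w), 0) − (r, w) = (0, w·(e^{−4r} − 1)). In particular, the solution starting at (r, w) is 2π-periodic if and only if w = 0. -/
import Mathlib


open Real

/-- concatenating the four explicit sector solutions of the unperturbed
4-zone system, they match at the switching angles `π/2, π, 3π/2`, and the time-`2π`
return map satisfies `x(2π,(r,w),0) − (r,w) = (0, w(e^{−4r} − 1))`; in particular the
solution starting at `(r,w)` is `2π`-periodic iff `w = 0`. -/
theorem stmt_15 (r w : ℝ) (hr : 0 < r)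
    (x₁ x₂ x₃ x₄ : ℝ → ℝ × ℝ)
    (hx₁ : ∀ θ, x₁ θ = (r / (Real.sin θ + Real.cos θ),
      w * Real.exp (-(r * Real.sin θ) / (Real.sin θ + Real.cos θ))))
    (hx₂ : ∀ θ, x₂ θ = (-r / (Real.cos θ - Real.sin θ),
      w * Real.exp (-(r * Real.sin θ) / (Real.cos θ - Real.sin θ) - 2 * r)))
    (hx₃ : ∀ θ, x₃ θ = (-r / (Real.sin θ + Real.cos θ),
      w * Real.exp (-(r * Real.sin θ) / (Real.sin θ + Real.cos θ) - 2 * r)))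
    (hx₄ : ∀ θ, x₄ θ = (r / (Real.cos θ - Real.sin θ),
      w * Real.exp (-(r * Real.sin θ) / (Real.cos θ - Real.sin θ) - 4 * r))) :
    x₁ (π / 2) = x₂ (π / 2) ∧ x₂ π = x₃ π ∧ x₃ (3 * π / 2) = x₄ (3 * π / 2)
      ∧ x₁ 0 = (r, w)
      ∧ x₄ (2 * π) - (r, w) = (0, w * (Real.exp (-4 * r) - 1))
      ∧ (x₄ (2 * π) = (r, w) ↔ w = 0) := by
  have s32 : Real.sin (3 * π / 2) = -1 := by
    have : (3:ℝ) * π / 2 = π + π / 2 := by ring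
    rw [this, Real.sin_add]; simp
  have c32 : Real.cos (3 * π / 2) = 0 := by
    have : (3:ℝ) * π / 2 = π + π / 2 := by ring
    rw [this, Real.cos_add]; simp
  refine ⟨?_, ?_, ?_, ?_, ?_, ?_⟩
  · rw [hx₁, hx₂]; norm_num; left; ring
  · rw [hx₂, hx₃]; norm_num
  · rw [hx₃, hx₄]; rw [s32, c32]; norm_num; left; ring
  · rw [hx₁]; norm_num
  · rw [hx₄]; simp [Real.sin_two_pi, Real.cos_two_pi, Prod.ext_iff, Prod.sub_def]
    ring_nf
  · rw [hx₄]; simp [Real.sin_two_pi, Real.cos_two_pi, Prod.ext_iff]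
    constructor
    · intro h
      have h2 : w * (Real.exp (-(4 * r)) - 1) = 0 := by rw [mul_sub]; linarith
      rcases mul_eq_zero.mp h2 with h3 | h3
      · exact h3
      · exfalso
        have : Real.exp (-(4 * r)) = 1 := by linarith
        rw [Real.exp_eq_one_iff] at this
        linarith
    · intro h; simp [h]
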